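/- arXiv:2306.12852 — 5 statements merged into one kernel-verified Lean document; each statement's English description precedes it below -/
import Mathlib

section
/- Let d ≥ 1 and let f : ℝ^d → ℝ be a function in the Zygmund class Λ_*(ℝ^d). Then the graph of f is thin for doubling measures on ℝ^{d+1}: for every doubling Borel measure μ on ℝ^{d+1}, we have μ(E) = 0, where E = {(x, f(x)) : x ∈ ℝ^d} ⊆ ℝ^{d+1} is the graph of f. -/
/-!
A Zygmund function is, near every point and at every scale `t`, within `O(t)` of an affine
function: bounded second differences control the deviation of `f` from its chords and from
additivity, which along an orthonormal basis assembles into an affine approximation. So every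
ball of radius `r` centred on the graph contains a ball of radius comparable to `r` missing the
graph — straight above it if the approximating slope is small, along the normal of the
approximating hyperplane if it is steep. For a doubling measure no point of such a porous set is
a Lebesgue density point (the density theorem applies to the missing balls, whose centres stay
within a bounded multiple of their radius from the point), so the graph is null.
-/

open MeasureTheory Metric Set Finset Filter Topology Module RealInnerProductSpace WithLp

def IsPorous {X : Type*} [PseudoMetricSpace X] (S : Set X) : Prop :=
  ∃ K : ℝ, ∀ z ∈ S, ∀ r > 0, ∃ w, closedBall w r ⊆ closedBall z (K * r) ∧
    Disjoint (closedBall w r) S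

theorem IsPorous.measure_eq_zero {X : Type*} [MetricSpace X] [MeasurableSpace X] [BorelSpace X]
    [SecondCountableTopology X] {μ : Measure X} [IsLocallyFiniteMeasure μ]
    [IsUnifLocDoublingMeasure μ] {S : Set X} (hS : IsPorous S) : μ S = 0 := by
  obtain ⟨K, hK⟩ := hS
  have hdens := IsUnifLocDoublingMeasure.ae_tendsto_measure_inter_div μ S K
  suffices μ.restrict S S = 0 by rwa [Measure.restrict_apply_self] at this
  refine measure_mono_null (fun z hz => ?_) (ae_iff.1 hdens)
  intro hdz
  set r : ℕ → ℝ := fun n => 1 / (n + 1)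
  have hr : Tendsto r atTop (𝓝[>] 0) := tendsto_nhdsWithin_iff.2
    ⟨tendsto_one_div_add_atTop_nhds_zero_nat, .of_forall fun _ => mem_Ioi.2 Nat.one_div_pos_of_nat⟩
  choose w hwz hwS using fun n => hK z hz (r n) Nat.one_div_pos_of_nat
  have hmem : ∀ n, z ∈ closedBall (w n) (K * r n) := fun n => by
    rw [mem_closedBall_comm]; exact hwz n (mem_closedBall_self Nat.one_div_pos_of_nat.le)
  have hzero : ∀ n, μ (S ∩ closedBall (w n) (r n)) / μ (closedBall (w n) (r n)) = 0 := fun n => by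
    rw [(hwS n).symm.inter_eq, measure_empty, ENNReal.zero_div]
  have := hdz w r hr (.of_forall hmem)
  simp only [hzero, tendsto_const_nhds_iff] at this
  exact zero_ne_one this

theorem abs_le_of_abs_second_diff_le {e : ℝ → ℝ} {M : ℝ} (he : ContinuousOn e (Icc 0 1))
    (h0 : e 0 = 0) (h1 : e 1 = 0)
    (hM : ∀ s ν, s - ν ∈ Icc (0 : ℝ) 1 → s + ν ∈ Icc (0 : ℝ) 1 →
      |e (s + ν) + e (s - ν) - 2 * e s| ≤ M)
    {s : ℝ} (hs : s ∈ Icc (0 : ℝ) 1) : |e s| ≤ M := by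
  obtain ⟨s₀, ⟨hs₀0, hs₀1⟩, hmax⟩ :=
    isCompact_Icc.exists_isMaxOn (nonempty_Icc.2 zero_le_one) he.abs
  replace hmax : ∀ y ∈ Icc (0 : ℝ) 1, |e y| ≤ |e s₀| := hmax
  refine (hmax s hs).trans ?_
  -- the symmetric step from the maximum `s₀` to the nearer endpoint gives `2|e s₀| ≤ |e s₀| + M`
  set ν := min s₀ (1 - s₀)
  have hν : 0 ≤ ν ∧ ν ≤ s₀ ∧ ν ≤ 1 - s₀ :=
    ⟨le_min hs₀0 (by linarith), min_le_left _ _, min_le_right _ _⟩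
  have hminus : s₀ - ν ∈ Icc (0 : ℝ) 1 := ⟨by linarith, by linarith⟩
  have hplus : s₀ + ν ∈ Icc (0 : ℝ) 1 := ⟨by linarith, by linarith⟩
  have hend : e (s₀ - ν) = 0 ∨ e (s₀ + ν) = 0 := by
    rcases min_choice s₀ (1 - s₀) with h | h
    · left; simp [ν, h, h0]
    · right; simp [ν, h, h1]
  have htwo : 2 * |e s₀| ≤ |e (s₀ + ν)| + |e (s₀ - ν)| + M := by
    have hsum := abs_add_le (e (s₀ + ν)) (e (s₀ - ν))
    have hdiff := abs_sub (e (s₀ + ν) + e (s₀ - ν)) (e (s₀ + ν) + e (s₀ - ν) - 2 * e s₀)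
    rw [show e (s₀ + ν) + e (s₀ - ν) - (e (s₀ + ν) + e (s₀ - ν) - 2 * e s₀) = 2 * e s₀ by ring,
      abs_mul, abs_two] at hdiff
    linarith [hM s₀ ν hminus hplus]
  rcases hend with h | h <;> rw [h, abs_zero] at htwo
  · linarith [hmax _ hplus]
  · linarith [hmax _ hminus]

def ZygmundWith {E : Type*} [NormedAddCommGroup E] [NormedSpace ℝ E] (C : ℝ) (f : E → ℝ) : Prop :=
  ∀ x h : E, |f (x + h) + f (x - h) - 2 * f x| ≤ C * ‖h‖

namespace ZygmundWith

variable {E : Type*} [NormedAddCommGroup E] [NormedSpace ℝ E] {C : ℝ} {f : E → ℝ}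

theorem mono (hf : ZygmundWith C f) {C' : ℝ} (hC : C ≤ C') : ZygmundWith C' f :=
  fun x h => (hf x h).trans (mul_le_mul_of_nonneg_right hC (norm_nonneg h))

theorem abs_sub_chord_le (hf : ZygmundWith C f) (hC : 0 ≤ C) (hcont : Continuous f) (x v : E)
    {s : ℝ} (hs : s ∈ Icc (0 : ℝ) 1) :
    |f (x + s • v) - f x - s * (f (x + v) - f x)| ≤ C * ‖v‖ := by
  refine abs_le_of_abs_second_diff_le (e := fun s => f (x + s • v) - f x - s * (f (x + v) - f x))
    (by fun_prop) (by simp) (by simp) (fun s ν hminus hplus => ?_) hs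
  have hν : |ν| ≤ 1 := abs_le.2 ⟨by linarith [hminus.2, hplus.1], by linarith [hminus.1, hplus.2]⟩
  calc _ = |f (x + s • v + ν • v) + f (x + s • v - ν • v) - 2 * f (x + s • v)| := by
        simp only [add_smul, sub_smul, add_assoc, add_sub_assoc]
        congr 1; ring
    _ ≤ C * (|ν| * ‖v‖) := by simpa [norm_smul] using hf (x + s • v) (ν • v)
    _ ≤ C * ‖v‖ := mul_le_mul_of_nonneg_left (mul_le_of_le_one_left (norm_nonneg v) hν) hC

theorem abs_sub_chord_le_two_mul (hf : ZygmundWith C f) (hC : 0 ≤ C) (hcont : Continuous f)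
    (x v : E) {s : ℝ} (hs : s ∈ Icc (-1 : ℝ) 1) :
    |f (x + s • v) - f x - s * (f (x + v) - f x)| ≤ 2 * (C * ‖v‖) := by
  have hCv : 0 ≤ C * ‖v‖ := mul_nonneg hC (norm_nonneg v)
  rcases le_total 0 s with hs₀ | hs₀
  · linarith [hf.abs_sub_chord_le hC hcont x v ⟨hs₀, hs.2⟩]
  -- reflect through `x`, paying one second difference
  have hrefl := hf.abs_sub_chord_le hC hcont x (-v) (s := -s) ⟨by linarith, by linarith [hs.1]⟩
  have hsecond : |s * (f (x + v) + f (x - v) - 2 * f x)| ≤ C * ‖v‖ := by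
    rw [abs_mul]
    exact (mul_le_of_le_one_left (abs_nonneg _) (abs_le.2 ⟨hs.1, by linarith⟩)).trans (hf x v)
  rw [neg_smul_neg, norm_neg, ← sub_eq_add_neg] at hrefl
  calc _ = |(f (x + s • v) - f x - -s * (f (x - v) - f x))
        - s * (f (x + v) + f (x - v) - 2 * f x)| := by
        congr 1; ring
    _ ≤ _ := (abs_sub _ _).trans (by linarith)

theorem abs_mixed_diff_le (hf : ZygmundWith C f) (hC : 0 ≤ C) (x u v : E) :
    |f (x + (u + v)) + f x - f (x + u) - f (x + v)| ≤ C * (‖u‖ + ‖v‖) := by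
  set m := x + (2⁻¹ : ℝ) • (u + v)
  have hnorm : ∀ w : E, ‖w‖ ≤ ‖u‖ + ‖v‖ → C * ‖(2⁻¹ : ℝ) • w‖ ≤ C * (‖u‖ + ‖v‖) / 2 := by
    intro w hw
    rw [norm_smul, norm_inv, Real.norm_ofNat, mul_div_assoc]
    gcongr
    linarith
  have hsum := hf m ((2⁻¹ : ℝ) • (u + v))
  have hdiff := hf m ((2⁻¹ : ℝ) • (u - v))
  -- the mixed difference is the difference of the second differences at the midpoint `m`
  calc _ = |(f (m + (2⁻¹ : ℝ) • (u + v)) + f (m - (2⁻¹ : ℝ) • (u + v)) - 2 * f m)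
        - (f (m + (2⁻¹ : ℝ) • (u - v)) + f (m - (2⁻¹ : ℝ) • (u - v)) - 2 * f m)| := by
        have h1 : m + (2⁻¹ : ℝ) • (u + v) = x + (u + v) := by module
        have h2 : m - (2⁻¹ : ℝ) • (u + v) = x := by module
        have h3 : m + (2⁻¹ : ℝ) • (u - v) = x + u := by module
        have h4 : m - (2⁻¹ : ℝ) • (u - v) = x + v := by module
        rw [h1, h2, h3, h4]; congr 1; ring
    _ ≤ _ := (abs_sub _ _).trans (by
        linarith [hnorm _ (norm_add_le u v), hnorm _ (norm_sub_le u v)])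

theorem abs_sum_sub_sum_le {ι : Type*} (hf : ZygmundWith C f) (hC : 0 ≤ C) (x : E)
    (s : Finset ι) (u : ι → E) {t : ℝ} (hu : ∀ i ∈ s, ‖u i‖ ≤ t) :
    |f (x + ∑ i ∈ s, u i) - f x - ∑ i ∈ s, (f (x + u i) - f x)| ≤ (#s : ℝ) ^ 2 * C * t := by
  classical
  induction s using Finset.induction_on with
  | empty => simp
  | insert j s hj ih =>
    have hu' : ∀ i ∈ s, ‖u i‖ ≤ t := fun i hi => hu i (mem_insert_of_mem hi)
    have huj := hu j (mem_insert_self j s)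
    have hsum : ‖∑ i ∈ s, u i‖ ≤ #s * t :=
      (norm_sum_le _ _).trans ((sum_le_sum hu').trans (by simp))
    have hCt : 0 ≤ C * t := mul_nonneg hC ((norm_nonneg _).trans huj)
    have hmixed := hf.abs_mixed_diff_le hC x (u j) (∑ i ∈ s, u i)
    rw [sum_insert hj, sum_insert hj, card_insert_of_notMem hj]
    calc _ = |(f (x + (u j + ∑ i ∈ s, u i)) + f x - f (x + u j) - f (x + ∑ i ∈ s, u i))
          + (f (x + ∑ i ∈ s, u i) - f x - ∑ i ∈ s, (f (x + u i) - f x))| := by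
          congr 1; ring
      _ ≤ C * (t + #s * t) + (#s : ℝ) ^ 2 * C * t := (abs_add_le _ _).trans (add_le_add
          (hmixed.trans (mul_le_mul_of_nonneg_left (add_le_add huj hsum) hC)) (ih hu'))
      _ ≤ _ := by push_cast; nlinarith

end ZygmundWith

section InnerProductSpace

variable {E : Type*} [NormedAddCommGroup E] [InnerProductSpace ℝ E] {C : ℝ} {f : E → ℝ}

theorem ZygmundWith.exists_abs_sub_inner_le [FiniteDimensional ℝ E]
    (hf : ZygmundWith C f) (hC : 0 ≤ C) (hcont : Continuous f)
    (x : E) {t : ℝ} (ht : 0 < t) :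
    ∃ g : E, ∀ y, ‖y - x‖ ≤ t →
      |f y - f x - ⟪y - x, g⟫| ≤ finrank ℝ E * (finrank ℝ E + 2) * C * t := by
  set b := stdOrthonormalBasis ℝ E
  set slope : Fin (finrank ℝ E) → ℝ := fun i => (f (x + t • b i) - f x) / t
  refine ⟨∑ i, slope i • b i, fun y hy => ?_⟩
  set c : Fin (finrank ℝ E) → ℝ := fun i => ⟪b i, y - x⟫
  have hy_eq : y = x + ∑ i, c i • b i := by rw [b.sum_repr']; abel
  have hc : ∀ i, |c i| ≤ t := fun i =>
    (abs_real_inner_le_norm _ _).trans (by rw [b.orthonormal.1 i, one_mul]; exact hy)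
  have hinner : ⟪y - x, ∑ i, slope i • b i⟫ = ∑ i, c i * slope i := by
    simp only [inner_sum, inner_smul_right, c, real_inner_comm, mul_comm]
  have hchain := hf.abs_sum_sub_sum_le hC x univ (fun i => c i • b i) (t := t) fun i _ => by
    rw [norm_smul, b.orthonormal.1 i, mul_one, Real.norm_eq_abs]; exact hc i
  have hcoord : ∀ i, |f (x + c i • b i) - f x - c i * slope i| ≤ 2 * (C * t) := fun i => by
    have hs : c i / t ∈ Icc (-1 : ℝ) 1 := by
      constructor
      · rw [le_div_iff₀ ht]; linarith [(abs_le.1 (hc i)).1]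
      · rw [div_le_iff₀ ht]; linarith [(abs_le.1 (hc i)).2]
    have := hf.abs_sub_chord_le_two_mul hC hcont x (t • b i) hs
    rwa [smul_smul, div_mul_cancel₀ _ ht.ne', norm_smul, b.orthonormal.1 i,
      Real.norm_of_nonneg ht.le, mul_one, div_mul_comm, mul_comm] at this
  rw [card_univ, Fintype.card_fin] at hchain
  rw [hinner, hy_eq]
  calc _ = |(f (x + ∑ i, c i • b i) - f x - ∑ i, (f (x + c i • b i) - f x))
        + ∑ i, (f (x + c i • b i) - f x - c i * slope i)| := by
        congr 1; simp only [sum_sub_distrib]; ring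
    _ ≤ (finrank ℝ E : ℝ) ^ 2 * C * t + finrank ℝ E * (2 * (C * t)) :=
        (abs_add_le _ _).trans (add_le_add hchain ((abs_sum_le_sum_abs _ _).trans
          ((sum_le_sum fun i _ => hcoord i).trans (by simp))))
    _ = _ := by ring

theorem WithLp.inner_toLp_neg_one (q : WithLp 2 (E × ℝ)) (g : E) :
    ⟪q, toLp 2 (-g, 1)⟫ = q.snd - ⟪q.fst, g⟫ := by
  simp [sub_eq_neg_add]

variable {z w : WithLp 2 (E × ℝ)} {g : E} {κ t r : ℝ}

theorem disjoint_closedBall_graph (hz : z.snd = f z.fst)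
    (hslab : ∀ y, ‖y - z.fst‖ ≤ t → |f y - f z.fst - ⟪y - z.fst, g⟫| ≤ κ * t)
    (hfst : ∀ p ∈ closedBall w r, ‖p.fst - z.fst‖ ≤ t)
    (hw : κ * t + r * ‖toLp 2 (-g, (1 : ℝ))‖ < ⟪w - z, toLp 2 (-g, (1 : ℝ))⟫) :
    Disjoint (closedBall w r) {p : WithLp 2 (E × ℝ) | p.snd = f p.fst} := by
  refine disjoint_left.2 fun p hp (hpf : p.snd = f p.fst) => ?_
  set n : WithLp 2 (E × ℝ) := toLp 2 (-g, 1)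
  have hnear : ⟪p - z, n⟫ ≤ κ * t := by
    rw [inner_toLp_neg_one, sub_fst, sub_snd, hpf, hz]
    exact (le_abs_self _).trans (hslab _ (hfst p hp))
  have hfar : ⟪w - z, n⟫ - r * ‖n‖ ≤ ⟪p - z, n⟫ := by
    have hpw : |⟪p - w, n⟫| ≤ r * ‖n‖ := (abs_real_inner_le_norm _ _).trans
      (mul_le_mul_of_nonneg_right (mem_closedBall_iff_norm.1 hp) (norm_nonneg _))
    rw [show p - z = (p - w) + (w - z) by abel, inner_add_left]
    linarith [neg_abs_le ⟪p - w, n⟫]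
  linarith

theorem exists_closedBall_disjoint_graph_of_lt_norm (hz : z.snd = f z.fst)
    (hslab : ∀ y, ‖y - z.fst‖ ≤ 3 * r → |f y - f z.fst - ⟪y - z.fst, g⟫| ≤ κ * (3 * r))
    (hr : 0 < r) (hκ : 0 ≤ κ) (hg : 3 * κ < ‖g‖) :
    ∃ w, closedBall w r ⊆ closedBall z (3 * r) ∧
      Disjoint (closedBall w r) {p : WithLp 2 (E × ℝ) | p.snd = f p.fst} := by
  set n : WithLp 2 (E × ℝ) := toLp 2 (-g, 1)
  have hgn : ‖g‖ ≤ ‖n‖ := by simpa [n] using WithLp.norm_fst_le E n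
  have hn : 0 < ‖n‖ := by linarith
  -- step off the graph by `2 r` along the unit normal of the approximating hyperplane
  set w := z + (2 * r / ‖n‖) • n
  have hwz : dist w z = 2 * r := by
    rw [dist_eq_norm, add_sub_cancel_left, norm_smul, Real.norm_of_nonneg (by positivity),
      div_mul_cancel₀ _ hn.ne']
  refine ⟨w, closedBall_subset_closedBall' (by linarith), disjoint_closedBall_graph hz hslab
    (fun p hp => ?_) ?_⟩
  · calc ‖p.fst - z.fst‖ ≤ dist p z := by rw [← dist_eq_norm]; exact WithLp.dist_fst_le p z
      _ ≤ 3 * r := by linarith [dist_triangle p w z, mem_closedBall.1 hp]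
  · rw [add_sub_cancel_left, real_inner_smul_left, real_inner_self_eq_norm_sq]
    field_simp
    nlinarith

theorem exists_closedBall_disjoint_graph_of_norm_le (hz : z.snd = f z.fst)
    (hslab : ∀ y, ‖y - z.fst‖ ≤ 3 * r → |f y - f z.fst - ⟪y - z.fst, g⟫| ≤ κ * (3 * r))
    (hr : 0 < r) (hg : ‖g‖ ≤ 3 * κ) :
    ∃ w, closedBall w r ⊆ closedBall z ((6 * κ + 3) * r) ∧
      Disjoint (closedBall w r) {p : WithLp 2 (E × ℝ) | p.snd = f p.fst} := by
  set n : WithLp 2 (E × ℝ) := toLp 2 (-g, 1)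
  have hn : ‖n‖ ≤ ‖g‖ + 1 := by
    rw [prod_norm_eq_of_L2, Real.sqrt_le_iff]
    refine ⟨by positivity, ?_⟩
    simp only [n, toLp_fst, toLp_snd, norm_neg, norm_one]
    nlinarith [norm_nonneg g]
  set w := z + toLp 2 ((0 : E), (6 * κ + 2) * r)
  have hwz : dist w z = (6 * κ + 2) * r := by
    rw [dist_eq_norm, add_sub_cancel_left, norm_toLp_snd,
      Real.norm_of_nonneg (by nlinarith [norm_nonneg g])]
  refine ⟨w, closedBall_subset_closedBall' (by linarith), disjoint_closedBall_graph hz hslab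
    (fun p hp => ?_) ?_⟩
  · calc ‖p.fst - z.fst‖ = dist p.fst w.fst := by simp [w, dist_eq_norm]
      _ ≤ dist p w := WithLp.dist_fst_le p w
      _ ≤ 3 * r := by linarith [mem_closedBall.1 hp]
  · rw [add_sub_cancel_left, inner_toLp_neg_one]
    simp only [toLp_snd, toLp_fst, inner_zero_left, sub_zero]
    nlinarith

theorem ZygmundWith.isPorous_graph [FiniteDimensional ℝ E]
    (hf : ZygmundWith C f) (hC : 0 ≤ C) (hcont : Continuous f) :
    IsPorous {p : WithLp 2 (E × ℝ) | p.snd = f p.fst} := by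
  set κ := (finrank ℝ E : ℝ) * (finrank ℝ E + 2) * C
  have hκ : 0 ≤ κ := by positivity
  refine ⟨6 * κ + 3, fun z (hz : z.snd = f z.fst) r hr => ?_⟩
  obtain ⟨g, hg⟩ := hf.exists_abs_sub_inner_le hC hcont z.fst (t := 3 * r) (by positivity)
  rcases lt_or_ge (3 * κ) ‖g‖ with hsteep | hflat
  · obtain ⟨w, hwz, hw⟩ := exists_closedBall_disjoint_graph_of_lt_norm hz hg hr hκ hsteep
    exact ⟨w, hwz.trans (closedBall_subset_closedBall (by nlinarith)), hw⟩
  · exact exists_closedBall_disjoint_graph_of_norm_le hz hg hr hflat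

end InnerProductSpace

theorem zygmund_graph_thin_for_doubling_measures_general
    (d : ℕ)
    (f : EuclideanSpace ℝ (Fin d) → ℝ)
    (hf_cont : Continuous f)
    (hf_zyg : ∃ C : ℝ, ∀ x h : EuclideanSpace ℝ (Fin d), h ≠ 0 →
      |f (x + h) + f (x - h) - 2 * f x| ≤ C * ‖h‖)
    [MeasurableSpace (WithLp 2 (EuclideanSpace ℝ (Fin d) × ℝ))]
    [BorelSpace (WithLp 2 (EuclideanSpace ℝ (Fin d) × ℝ))]
    (μ : Measure (WithLp 2 (EuclideanSpace ℝ (Fin d) × ℝ)))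
    (hμ_fin : ∀ (z : WithLp 2 (EuclideanSpace ℝ (Fin d) × ℝ)) (r : ℝ),
      μ (closedBall z r) < ⊤)
    (hμ_doub : ∃ C : ℝ, 0 < C ∧ ∀ (z : WithLp 2 (EuclideanSpace ℝ (Fin d) × ℝ)) (r : ℝ),
      μ (closedBall z r) ≤ ENNReal.ofReal C * μ (closedBall z (r / 2))) :
    μ {z : WithLp 2 (EuclideanSpace ℝ (Fin d) × ℝ) |
        ∃ x : EuclideanSpace ℝ (Fin d), z = (WithLp.equiv 2 _).symm (x, f x)} = 0 := by
  obtain ⟨C, hC⟩ := hf_zyg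
  have hZ : ZygmundWith C f := fun x h => by
    rcases eq_or_ne h 0 with rfl | hh
    · simp [two_mul]
    · exact hC x h hh
  obtain ⟨D, -, hD⟩ := hμ_doub
  have : IsLocallyFiniteMeasure μ :=
    ⟨fun z => ⟨closedBall z 1, closedBall_mem_nhds z one_pos, hμ_fin z 1⟩⟩
  have : IsUnifLocDoublingMeasure μ := ⟨⟨D.toNNReal, .of_forall fun r z => by
    simpa only [mul_div_cancel_left₀ r two_ne_zero, ENNReal.ofReal] using hD z (2 * r)⟩⟩
  have hgraph : {z : WithLp 2 (EuclideanSpace ℝ (Fin d) × ℝ) |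
      ∃ x, z = (WithLp.equiv 2 _).symm (x, f x)} = {p | p.snd = f p.fst} := by
    ext p
    exact ⟨by rintro ⟨x, rfl⟩; rfl, fun hp => ⟨p.fst, by rw [← hp]; rfl⟩⟩
  rw [hgraph]
  exact ((hZ.mono (le_max_left C 0)).isPorous_graph (le_max_right C 0) hf_cont).measure_eq_zero

/-- **Zygmund graphs are thin for doubling measures.**
If `f : ℝ^d → ℝ` (d ≥ 1) is bounded, continuous, and in the Zygmund class
(its second divided differences are uniformly bounded), then for every doubling
Borel measure `μ` on `ℝ^{d+1}` (identified with `ℝ^d × ℝ` carrying the Euclidean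
metric, i.e. the `L²` product), the graph of `f` is `μ`-null. -/
theorem zygmund_graph_thin_for_doubling_measures
    (d : ℕ) (hd : 1 ≤ d)
    (f : EuclideanSpace ℝ (Fin d) → ℝ)
    (hf_bdd : ∃ B : ℝ, ∀ x, |f x| ≤ B)
    (hf_cont : Continuous f)
    (hf_zyg : ∃ C : ℝ, ∀ x h : EuclideanSpace ℝ (Fin d), h ≠ 0 →
      |f (x + h) + f (x - h) - 2 * f x| ≤ C * ‖h‖)
    [MeasurableSpace (WithLp 2 (EuclideanSpace ℝ (Fin d) × ℝ))]
    [BorelSpace (WithLp 2 (EuclideanSpace ℝ (Fin d) × ℝ))]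
    (μ : Measure (WithLp 2 (EuclideanSpace ℝ (Fin d) × ℝ)))
    (hμ_pos : ∀ (z : WithLp 2 (EuclideanSpace ℝ (Fin d) × ℝ)) (r : ℝ), 0 < r →
      0 < μ (closedBall z r))
    (hμ_fin : ∀ (z : WithLp 2 (EuclideanSpace ℝ (Fin d) × ℝ)) (r : ℝ),
      μ (closedBall z r) < ⊤)
    (hμ_doub : ∃ C : ℝ, 0 < C ∧ ∀ (z : WithLp 2 (EuclideanSpace ℝ (Fin d) × ℝ)) (r : ℝ),
      μ (closedBall z r) ≤ ENNReal.ofReal C * μ (closedBall z (r / 2))) :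
    μ {z : WithLp 2 (EuclideanSpace ℝ (Fin d) × ℝ) |
        ∃ x : EuclideanSpace ℝ (Fin d), z = (WithLp.equiv 2 _).symm (x, f x)} = 0 :=
  zygmund_graph_thin_for_doubling_measures_general d f hf_cont hf_zyg μ hμ_fin hμ_doub
end

section
/- Let d ≥ 1, f : ℝ^d → ℝ, x₀ ∈ ℝ^d, r > 0, and M > 1. Suppose P : ℝ^d → ℝ is an affine function with |∇P| > 1 such that |f(x) − P(x)| ≤ M·r for all x in the open ball B(x₀, 2r) ⊆ ℝ^d. Set r' = min(r/2, M·r/|∇P|), u = ∇P/|∇P|, and x₀' = x₀ + 2r'·u. Then for all x in the open ball B(x₀', r'), we have |f(x) − f(x₀')| ≤ 3M·r. -/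
/-!
On the ball `B(x₀', r')` the affine function `P` varies by at most `|∇P|·r' ≤ M·r`, and this
ball lies inside `B(x₀, 2r)` because `|x₀' - x₀| + r' = 3r' ≤ 3r/2`. Comparing `f` with `P` at
both points costs `M·r` twice more. The positivity of `r` and `|∇P|` needed along the way
comes from `r' > 0`, i.e. from the ball `B(x₀', r')` being nonempty.
-/

open Metric

theorem abs_sub_le_of_abs_sub_le_on {α : Type*} {f g : α → ℝ} {s : Set α} {ε δ : ℝ}
    (hfg : ∀ x ∈ s, |f x - g x| ≤ ε) {x y : α} (hx : x ∈ s) (hy : y ∈ s)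
    (hg : |g x - g y| ≤ δ) : |f x - f y| ≤ ε + δ + ε := by
  have hx' := hfg x hx
  have hy' := abs_sub_comm (f y) (g y) ▸ hfg y hy
  linarith [abs_sub_le (f x) (g x) (f y), abs_sub_le (g x) (g y) (f y)]

theorem abs_inner_sub_inner_le {E : Type*} [SeminormedAddCommGroup E] [InnerProductSpace ℝ E]
    (a x y : E) : |inner ℝ a x - inner ℝ a y| ≤ ‖a‖ * dist x y := by
  rw [← inner_sub_right, dist_eq_norm]
  exact abs_real_inner_le_norm a (x - y)

theorem affine_approx_large_gradient_oscillation_general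
    (d : ℕ)
    (f : EuclideanSpace ℝ (Fin d) → ℝ)
    (x₀ : EuclideanSpace ℝ (Fin d)) (r : ℝ)
    (M : ℝ)
    (a : EuclideanSpace ℝ (Fin d)) (b : ℝ)
    (hApprox : ∀ x ∈ ball x₀ (2 * r), |f x - ((inner ℝ a x : ℝ) + b)| ≤ M * r) :
    ∀ x ∈ ball (x₀ + (2 * min (r / 2) (M * r / ‖a‖)) • (‖a‖⁻¹ • a))
        (min (r / 2) (M * r / ‖a‖)),
      |f x - f (x₀ + (2 * min (r / 2) (M * r / ‖a‖)) • (‖a‖⁻¹ • a))| ≤ 3 * M * r := by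
  set r' := min (r / 2) (M * r / ‖a‖)
  set x₀' := x₀ + (2 * r') • (‖a‖⁻¹ • a)
  intro x hx
  have hr' : 0 < r' := pos_of_mem_ball hx
  have hr'r : r' ≤ r / 2 := min_le_left _ _
  have hr'a : r' ≤ M * r / ‖a‖ := min_le_right _ _
  -- `M * r / ‖a‖` is the junk value `0` when `a = 0`, which the nonempty ball rules out.
  have ha : 0 < ‖a‖ := by
    by_contra! h
    simp only [norm_le_zero_iff.mp h, norm_zero, div_zero] at hr'a
    linarith
  have hdist : dist x₀' x₀ = 2 * r' := by
    rw [dist_self_add_left, norm_smul, norm_smul, norm_inv, norm_norm, inv_mul_cancel₀ ha.ne',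
      mul_one, Real.norm_of_nonneg (by positivity)]
  have hball : ball x₀' r' ⊆ ball x₀ (2 * r) := ball_subset_ball' (by linarith)
  have hP : |inner ℝ a x - inner ℝ a x₀'| ≤ M * r :=
    calc |inner ℝ a x - inner ℝ a x₀'| ≤ ‖a‖ * dist x x₀' := abs_inner_sub_inner_le a x x₀'
      _ ≤ ‖a‖ * r' := by gcongr; exact (mem_ball.mp hx).le
      _ ≤ M * r := (le_div_iff₀' ha).mp hr'a
  have key := abs_sub_le_of_abs_sub_le_on hApprox (hball hx) (hball (mem_ball_self hr'))
    (by simpa only [add_sub_add_right_eq_sub] using hP)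
  linarith

/-- If `f : ℝ^d → ℝ` is approximated within `M·r` on `B(x₀, 2r)` by an affine
function `P(x) = ⟨a, x⟩ + b` with gradient `|a| > 1`, then with
`r' = min(r/2, M·r/|a|)`, `u = a/|a|`, and `x₀' = x₀ + 2r'·u`, one has
`|f x - f x₀'| ≤ 3M·r` for all `x ∈ B(x₀', r')`. -/
theorem affine_approx_large_gradient_oscillation
    (d : ℕ) (hd : 1 ≤ d)
    (f : EuclideanSpace ℝ (Fin d) → ℝ)
    (x₀ : EuclideanSpace ℝ (Fin d)) (r : ℝ) (hr : 0 < r)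
    (M : ℝ) (hM : 1 < M)
    (a : EuclideanSpace ℝ (Fin d)) (b : ℝ)
    (ha : 1 < ‖a‖)
    (hApprox : ∀ x ∈ ball x₀ (2 * r), |f x - ((inner ℝ a x : ℝ) + b)| ≤ M * r) :
    ∀ x ∈ ball (x₀ + (2 * min (r / 2) (M * r / ‖a‖)) • (‖a‖⁻¹ • a))
        (min (r / 2) (M * r / ‖a‖)),
      |f x - f (x₀ + (2 * min (r / 2) (M * r / ‖a‖)) • (‖a‖⁻¹ • a))| ≤ 3 * M * r :=
  affine_approx_large_gradient_oscillation_general d f x₀ r M a b hApprox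
end

section
/- Let d ≥ 1, f : ℝ^d → ℝ, x₀ ∈ ℝ^d, r > 0, and M > 1. Suppose P : ℝ^d → ℝ is an affine function with |∇P| > 1 such that |f(x) − P(x)| ≤ M·r for all x in the open ball B(x₀, 2r) ⊆ ℝ^d. Set r' = min(r/2, M·r/|∇P|), u = ∇P/|∇P|, x₀' = x₀ + 2r'·u, σ = 1 if f(x₀) ≥ f(x₀') and σ = −1 otherwise, z₀ = (x₀, f(x₀)) ∈ ℝ^{d+1}, and z₀'' = (x₀ + 2r'·u, f(x₀) + σ·(3M+1)·r) ∈ ℝ^{d+1}. Then |z₀ − z₀''| ≤ (5M+1)·r and the open ball B(z₀'', r') in ℝ^{d+1} is disjoint from the graph E = {(x, f(x)) : x ∈ ℝ^d} of f. -/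
/-!
Write `c = f x₀ + σ(3M+1)r` for the height of the centre `z₀''`. Since `‖∇P‖ r' ≤ M r`, the
affine function `P` varies by at most `M r` on `B(x₀', r')`, so `f` varies there by at most
`3 M r` around `f x₀'`. The sign `σ` is chosen so that `c` lies on the far side of `f x₀'`
from `f x₀`, whence `|c - f x₀'| ≥ (3M+1) r`. A graph point in `B(z₀'', r')` would have
`|f x - c| < r' ≤ r/2`, which is incompatible with both bounds.
-/

open Metric

theorem WithLp.prod_dist_le_add_of_L2 {α β : Type*} [SeminormedAddCommGroup α]
    [SeminormedAddCommGroup β] (x y : WithLp 2 (α × β)) :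
    dist x y ≤ dist x.fst y.fst + dist x.snd y.snd := by
  have h₁ := dist_nonneg (x := x.fst) (y := y.fst)
  have h₂ := dist_nonneg (x := x.snd) (y := y.snd)
  rw [prod_dist_eq_of_L2, Real.sqrt_le_iff]
  constructor <;> nlinarith

theorem dist_add_smul_inv_norm_smul_le {V : Type*} [NormedAddCommGroup V] [NormedSpace ℝ V]
    (x v : V) {t : ℝ} (ht : 0 ≤ t) : dist (x + t • (‖v‖⁻¹ • v)) x ≤ t := by
  rw [dist_self_add_left, norm_smul, Real.norm_of_nonneg ht, norm_smul, norm_inv, norm_norm]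
  exact mul_le_of_le_one_right ht inv_mul_le_one

theorem le_abs_add_sign_mul_sub (p q K : ℝ) :
    K ≤ |p + (if q ≤ p then 1 else -1) * K - q| := by
  split_ifs
  · exact le_abs.2 (Or.inl (by linarith))
  · exact le_abs.2 (Or.inr (by linarith))

section AffineApproximation

variable {E : Type*} [NormedAddCommGroup E] [InnerProductSpace ℝ E]

theorem abs_sub_le_of_abs_sub_affine_le {f : E → ℝ} {a x y : E} {b ε : ℝ}
    (hx : |f x - (inner ℝ a x + b)| ≤ ε) (hy : |f y - (inner ℝ a y + b)| ≤ ε) :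
    |f x - f y| ≤ 2 * ε + ‖a‖ * dist x y := by
  have hlin : |inner ℝ a x - inner ℝ a y| ≤ ‖a‖ * dist x y := by
    rw [← inner_sub_right, dist_eq_norm]
    exact abs_real_inner_le_norm a _
  rw [abs_le] at hx hy hlin ⊢
  constructor <;> linarith

theorem abs_sub_le_of_affine_approx_on_ball {f : E → ℝ} {a x₀ x₁ x : E} {b ε R ρ : ℝ}
    (hApprox : ∀ y ∈ ball x₀ R, |f y - (inner ℝ a y + b)| ≤ ε)
    (hx₁ : dist x₁ x₀ ≤ 2 * ρ) (hρR : 3 * ρ ≤ R) (hρa : ρ * ‖a‖ ≤ ε) (hx : dist x x₁ < ρ) :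
    |f x - f x₁| ≤ 3 * ε := by
  have hρ : 0 < ρ := dist_nonneg.trans_lt hx
  have hx₁_mem : x₁ ∈ ball x₀ R := by rw [mem_ball]; linarith
  have hx_mem : x ∈ ball x₀ R := by rw [mem_ball]; linarith [dist_triangle x x₁ x₀]
  have hvar : ‖a‖ * dist x x₁ ≤ ε := by
    nlinarith [mul_le_mul_of_nonneg_left hx.le (norm_nonneg a)]
  linarith [abs_sub_le_of_abs_sub_affine_le (hApprox x hx_mem) (hApprox x₁ hx₁_mem)]

end AffineApproximation

theorem affine_approx_large_gradient_offset_ball_general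
    (d : ℕ)
    (f : EuclideanSpace ℝ (Fin d) → ℝ)
    (x₀ : EuclideanSpace ℝ (Fin d)) (r : ℝ) (hr : 0 < r)
    (M : ℝ) (hM : 1 < M)
    (a : EuclideanSpace ℝ (Fin d)) (b : ℝ)
    (hApprox : ∀ x ∈ ball x₀ (2 * r), |f x - ((inner ℝ a x : ℝ) + b)| ≤ M * r)
    (r' : ℝ) (hr' : r' = min (r / 2) (M * r / ‖a‖))
    (u : EuclideanSpace ℝ (Fin d)) (hu : u = ‖a‖⁻¹ • a)
    (x₀' : EuclideanSpace ℝ (Fin d)) (hx₀' : x₀' = x₀ + (2 * r') • u)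
    (σ : ℝ) (hσ : σ = if f x₀' ≤ f x₀ then 1 else -1)
    (z₀ z₀'' : WithLp 2 (EuclideanSpace ℝ (Fin d) × ℝ))
    (hz₀ : z₀ = (WithLp.equiv 2 _).symm (x₀, f x₀))
    (hz₀'' : z₀'' = (WithLp.equiv 2 _).symm (x₀ + (2 * r') • u,
      f x₀ + σ * ((3 * M + 1) * r))) :
    dist z₀ z₀'' ≤ (5 * M + 1) * r ∧
    ball z₀'' r' ∩
      {z : WithLp 2 (EuclideanSpace ℝ (Fin d) × ℝ) |
        ∃ x : EuclideanSpace ℝ (Fin d), z = (WithLp.equiv 2 _).symm (x, f x)} = ∅ := by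
  have hMr : 0 ≤ M * r := by positivity
  have hr'_nonneg : 0 ≤ r' := hr' ▸ le_min (by positivity) (div_nonneg hMr (norm_nonneg a))
  have hr'_le : r' ≤ r / 2 := hr' ▸ min_le_left _ _
  have hr'_a : r' * ‖a‖ ≤ M * r := mul_le_of_le_div₀ hMr (norm_nonneg a) (hr' ▸ min_le_right _ _)
  have hx₀'_dist : dist x₀' x₀ ≤ 2 * r' :=
    hx₀' ▸ hu ▸ dist_add_smul_inv_norm_smul_le x₀ a (by positivity)
  have hK : 0 < (3 * M + 1) * r := mul_pos (by linarith) hr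
  have hheight : |f x₀ + σ * ((3 * M + 1) * r) - f x₀| = (3 * M + 1) * r := by
    rw [add_sub_cancel_left, abs_mul σ, abs_of_pos hK, hσ]
    split_ifs <;> norm_num
  have hsep : (3 * M + 1) * r ≤ |f x₀ + σ * ((3 * M + 1) * r) - f x₀'| :=
    hσ ▸ le_abs_add_sign_mul_sub (f x₀) (f x₀') ((3 * M + 1) * r)
  rw [← hx₀'] at hz₀''
  subst hz₀ hz₀''
  refine ⟨?_, Set.eq_empty_iff_forall_notMem.2 ?_⟩
  · refine (WithLp.prod_dist_le_add_of_L2 _ _).trans ?_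
    simp only [WithLp.equiv_symm_apply, WithLp.toLp_fst, WithLp.toLp_snd, Real.dist_eq,
      abs_sub_comm (f x₀), hheight, dist_comm x₀]
    nlinarith
  · rintro _ ⟨hz, x, rfl⟩
    have hx : dist x x₀' < r' := by simpa using (WithLp.dist_fst_le _ _).trans_lt hz
    have hy : |f x - (f x₀ + σ * ((3 * M + 1) * r))| < r' := by
      simpa [Real.dist_eq] using (WithLp.dist_snd_le _ _).trans_lt hz
    have hosc := abs_sub_le_of_affine_approx_on_ball hApprox hx₀'_dist (by linarith) hr'_a hx
    linarith [abs_sub_le (f x₀ + σ * ((3 * M + 1) * r)) (f x) (f x₀'),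
      abs_sub_comm (f x₀ + σ * ((3 * M + 1) * r)) (f x)]

/-- If `f : ℝ^d → ℝ` is approximated within `M·r` on `B(x₀, 2r)` by an affine
function with gradient `a`, `|a| > 1`, then with `r' = min(r/2, M·r/|a|)`,
`u = a/|a|`, `x₀' = x₀ + 2r'·u`, `σ = sign(f x₀ - f x₀')`,
`z₀ = (x₀, f x₀)` and `z₀'' = (x₀ + 2r'·u, f x₀ + σ·(3M+1)·r)` in
`ℝ^{d+1} = ℝ^d × ℝ` (Euclidean metric), one has `|z₀ - z₀''| ≤ (5M+1)·r` and the
ball `B(z₀'', r')` is disjoint from the graph of `f`. -/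
theorem affine_approx_large_gradient_offset_ball
    (d : ℕ) (hd : 1 ≤ d)
    (f : EuclideanSpace ℝ (Fin d) → ℝ)
    (x₀ : EuclideanSpace ℝ (Fin d)) (r : ℝ) (hr : 0 < r)
    (M : ℝ) (hM : 1 < M)
    (a : EuclideanSpace ℝ (Fin d)) (b : ℝ)
    (ha : 1 < ‖a‖)
    (hApprox : ∀ x ∈ ball x₀ (2 * r), |f x - ((inner ℝ a x : ℝ) + b)| ≤ M * r)
    (r' : ℝ) (hr' : r' = min (r / 2) (M * r / ‖a‖))
    (u : EuclideanSpace ℝ (Fin d)) (hu : u = ‖a‖⁻¹ • a)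
    (x₀' : EuclideanSpace ℝ (Fin d)) (hx₀' : x₀' = x₀ + (2 * r') • u)
    (σ : ℝ) (hσ : σ = if f x₀' ≤ f x₀ then 1 else -1)
    (z₀ z₀'' : WithLp 2 (EuclideanSpace ℝ (Fin d) × ℝ))
    (hz₀ : z₀ = (WithLp.equiv 2 _).symm (x₀, f x₀))
    (hz₀'' : z₀'' = (WithLp.equiv 2 _).symm (x₀ + (2 * r') • u,
      f x₀ + σ * ((3 * M + 1) * r))) :
    dist z₀ z₀'' ≤ (5 * M + 1) * r ∧
    ball z₀'' r' ∩
      {z : WithLp 2 (EuclideanSpace ℝ (Fin d) × ℝ) |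
        ∃ x : EuclideanSpace ℝ (Fin d), z = (WithLp.equiv 2 _).symm (x, f x)} = ∅ :=
  affine_approx_large_gradient_offset_ball_general d f x₀ r hr M hM a b hApprox r' hr' u hu x₀' hx₀'
    σ hσ z₀ z₀'' hz₀ hz₀''
end

section
/- Let d ≥ 1 and let f : ℝ^d → ℝ belong to the Zygmund class Λ_*(ℝ^d). Then there exists a constant M > 0 such that for every x₀ ∈ ℝ^d and every r > 0 there is an affine function P : ℝ^d → ℝ with sup_{x ∈ B(x₀, r)} |f(x) − P(x)| ≤ M·r, where B(x₀, r) is the open ball in ℝ^d. -/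
/-!
Restricted to a segment `s ↦ f (y + s • w)`, `s ∈ [-1, 1]`, a Zygmund function has second
differences `O(‖w‖)`, and a function vanishing at both ends of an interval is bounded by the
bound on its second differences (look at a point where `|g|` is maximal). So on every segment
`f` is `O(‖w‖)`-close to its chord. Comparing chords through different base points costs
another Zygmund estimate (the four points `y ± w`, `z ± w` form a parallelogram), so walking
from `x₀` to `x` along the `d` directions of an orthonormal basis, using the chord slopes at
`x₀` each time, yields an affine approximation with error `O(d² r)`.
-/

open Metric Set
open scoped Finset

def IsZygmundWith {E : Type*} [SeminormedAddCommGroup E] (C : ℝ) (f : E → ℝ) : Prop :=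
  ∀ x h : E, |f (x + h) + f (x - h) - 2 * f x| ≤ C * ‖h‖

theorem abs_le_of_abs_secondDiff_le {g : ℝ → ℝ} {a b K : ℝ} (hab : a ≤ b)
    (hg : ContinuousOn g (Icc a b)) (ha : g a = 0) (hb : g b = 0)
    (hK : ∀ s t, s - t ∈ Icc a b → s + t ∈ Icc a b → |g (s + t) + g (s - t) - 2 * g s| ≤ K) :
    ∀ s ∈ Icc a b, |g s| ≤ K := by
  obtain ⟨t₀, ⟨hat₀, ht₀b⟩, hmax⟩ := isCompact_Icc.exists_isMaxOn (nonempty_Icc.2 hab) hg.abs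
  suffices ∃ t ∈ Icc a b, |g t - 2 * g t₀| ≤ K by
    obtain ⟨t, ht, htK⟩ := this
    intro s hs
    have hs_le : |g s| ≤ |g t₀| := hmax hs
    have ht_le : |g t| ≤ |g t₀| := hmax ht
    have := abs_sub_abs_le_abs_sub (2 * g t₀) (g t)
    rw [abs_sub_comm, abs_mul, abs_two] at this
    linarith
  -- `t₀` is the midpoint of the endpoint farther from it and a point of `[a, b]`
  rcases le_total (a + b) (2 * t₀) with h | h
  · refine ⟨2 * t₀ - b, ⟨by linarith, by linarith⟩, ?_⟩
    have := hK t₀ (b - t₀) ⟨by linarith, by linarith⟩ ⟨by linarith, by linarith⟩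
    rwa [add_sub_cancel, sub_sub_eq_add_sub, ← two_mul, hb, zero_add] at this
  · refine ⟨2 * t₀ - a, ⟨by linarith, by linarith⟩, ?_⟩
    have := hK t₀ (t₀ - a) ⟨by linarith, by linarith⟩ ⟨by linarith, by linarith⟩
    rwa [sub_sub_cancel, add_sub_assoc', ← two_mul, ha, add_zero] at this

namespace IsZygmundWith

variable {E : Type*} [NormedAddCommGroup E] {C : ℝ} {f : E → ℝ}

theorem of_forall_ne_zero
    (hf : ∀ x h : E, h ≠ 0 → |f (x + h) + f (x - h) - 2 * f x| ≤ C * ‖h‖) :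
    IsZygmundWith C f := by
  intro x h
  rcases eq_or_ne h 0 with rfl | hh
  · simp [two_mul]
  · exact hf x h hh

theorem mono {C' : ℝ} (hf : IsZygmundWith C f) (hCC' : C ≤ C') : IsZygmundWith C' f :=
  fun x h => (hf x h).trans (mul_le_mul_of_nonneg_right hCC' (norm_nonneg h))

variable [NormedSpace ℝ E]

theorem abs_sub_chord_le (hf : IsZygmundWith C f) (hC : 0 ≤ C) (hfc : Continuous f)
    (y w : E) {s : ℝ} (hs : s ∈ Icc (-1) 1) :
    |f (y + s • w) - f y - s * ((f (y + w) - f (y - w)) / 2)| ≤ 2 * (C * ‖w‖) := by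
  set chord : ℝ → ℝ := fun s => (f (y + w) + f (y - w)) / 2 + s * ((f (y + w) - f (y - w)) / 2)
  set g : ℝ → ℝ := fun s => f (y + s • w) - chord s
  have hg : ∀ s ∈ Icc (-1 : ℝ) 1, |g s| ≤ C * ‖w‖ := by
    refine abs_le_of_abs_secondDiff_le (by norm_num) (by fun_prop)
      (by simp only [g, chord, neg_smul, one_smul, ← sub_eq_add_neg]; ring)
      (by simp only [g, chord, one_smul]; ring) ?_
    intro s t ⟨h₁, h₂⟩ ⟨h₃, h₄⟩
    have hsecond : g (s + t) + g (s - t) - 2 * g s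
        = f (y + s • w + t • w) + f (y + s • w - t • w) - 2 * f (y + s • w) := by
      simp only [g, chord, add_smul, sub_smul, ← add_assoc, ← add_sub_assoc]
      ring
    rw [hsecond]
    refine (hf _ _).trans ?_
    rw [norm_smul, Real.norm_eq_abs, mul_left_comm]
    exact mul_le_of_le_one_left (mul_nonneg hC (norm_nonneg w))
      (abs_le.2 ⟨by linarith, by linarith⟩)
  have h₀ := hg 0 ⟨by norm_num, by norm_num⟩
  have hs' := hg s hs
  have : f (y + s • w) - f y - s * ((f (y + w) - f (y - w)) / 2) = g s - g 0 := by
    simp only [g, chord, zero_smul, add_zero]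
    ring
  rw [this]
  exact (abs_sub _ _).trans (by linarith)

theorem abs_sub_sub_sub_le (hf : IsZygmundWith C f) (hC : 0 ≤ C) (y z w : E) :
    |(f (y + w) - f (y - w)) - (f (z + w) - f (z - w))| ≤ C * (‖y - z‖ + 2 * ‖w‖) := by
  -- the second differences centred at `m` with steps `h₁`, `h₂` are over the
  -- diagonals `{y + w, z - w}` and `{y - w, z + w}` of the parallelogram
  set m := z + (2⁻¹ : ℝ) • (y - z)
  set h₁ := (2⁻¹ : ℝ) • (y - z) + w
  set h₂ := (2⁻¹ : ℝ) • (y - z) - w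
  have hnorm₁ : ‖h₁‖ ≤ 2⁻¹ * ‖y - z‖ + ‖w‖ :=
    (norm_add_le _ _).trans (by rw [norm_smul]; norm_num)
  have hnorm₂ : ‖h₂‖ ≤ 2⁻¹ * ‖y - z‖ + ‖w‖ :=
    (norm_sub_le _ _).trans (by rw [norm_smul]; norm_num)
  have hA := (hf m h₁).trans (mul_le_mul_of_nonneg_left hnorm₁ hC)
  have hB := (hf m h₂).trans (mul_le_mul_of_nonneg_left hnorm₂ hC)
  rw [show m + h₁ = y + w by module, show m - h₁ = z - w by module] at hA
  rw [show m + h₂ = y - w by module, show m - h₂ = z + w by module] at hB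
  calc _ = |(f (y + w) + f (z - w) - 2 * f m) - (f (y - w) + f (z + w) - 2 * f m)| := by
          congr 1; ring
    _ ≤ _ := (abs_sub _ _).trans (by linarith)

theorem abs_sub_shifted_chord_le (hf : IsZygmundWith C f) (hC : 0 ≤ C)
    (hfc : Continuous f) (y z w : E) {s : ℝ} (hs : s ∈ Icc (-1) 1) :
    |f (y + s • w) - f y - s * ((f (z + w) - f (z - w)) / 2)|
      ≤ C * (3 * ‖w‖ + ‖y - z‖ / 2) := by
  have hline := hf.abs_sub_chord_le hC hfc y w hs
  have hpar := hf.abs_sub_sub_sub_le hC y z w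
  have hs' : |s| ≤ 1 := abs_le.2 hs
  have hshift : |s * ((f (y + w) - f (y - w)) / 2) - s * ((f (z + w) - f (z - w)) / 2)|
      ≤ C * (‖y - z‖ + 2 * ‖w‖) / 2 := by
    rw [← mul_sub, abs_mul, ← sub_div, abs_div, abs_two]
    calc |s| * (|f (y + w) - f (y - w) - (f (z + w) - f (z - w))| / 2)
        ≤ 1 * (C * (‖y - z‖ + 2 * ‖w‖) / 2) := by gcongr
      _ = _ := one_mul _
  exact (abs_sub_le _ (s * ((f (y + w) - f (y - w)) / 2)) _).trans (by linarith)

theorem abs_sub_sum_le (hf : IsZygmundWith C f) (hC : 0 ≤ C) (hfc : Continuous f)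
    {ι : Type*} (s : Finset ι) (z : E) (w : ι → E) (c : ι → ℝ) {R : ℝ}
    (hw : ∀ i ∈ s, ‖w i‖ ≤ R) (hc : ∀ i ∈ s, c i ∈ Icc (-1) 1) :
    |f (z + ∑ i ∈ s, c i • w i) - f z - ∑ i ∈ s, c i * ((f (z + w i) - f (z - w i)) / 2)|
      ≤ C * R * (#s * (#s + 5)) / 2 := by
  classical
  induction s using Finset.induction_on with
  | empty => simp
  | insert j s hj ih =>
    simp only [Finset.forall_mem_insert] at hw hc
    set u := ∑ i ∈ s, c i • w i
    have hu : ‖u‖ ≤ #s * R := by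
      refine (norm_sum_le _ _).trans
        ((Finset.sum_le_card_nsmul _ _ _ fun i hi => ?_).trans_eq (nsmul_eq_mul _ _))
      rw [norm_smul, Real.norm_eq_abs]
      exact (mul_le_of_le_one_left (norm_nonneg _) (abs_le.2 (hc.2 i hi))).trans (hw.2 i hi)
    have hstep := hf.abs_sub_shifted_chord_le hC hfc (z + u) z (w j) hc.1
    rw [add_sub_cancel_left] at hstep
    have hR : 0 ≤ R := (norm_nonneg _).trans hw.1
    rw [Finset.sum_insert hj, Finset.sum_insert hj, Finset.card_insert_of_notMem hj, Nat.cast_succ]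
    rw [add_comm (c j • w j), ← add_assoc]
    calc _ = |(f (z + u + c j • w j) - f (z + u) - c j * ((f (z + w j) - f (z - w j)) / 2))
          + (f (z + u) - f z - ∑ i ∈ s, c i * ((f (z + w i) - f (z - w i)) / 2))| := by
            congr 1; ring
      _ ≤ C * (3 * R + #s * R / 2) + C * R * (#s * (#s + 5)) / 2 :=
            (abs_add_le _ _).trans (add_le_add (hstep.trans (by gcongr; exact hw.1))
              (ih hw.2 hc.2))
      _ ≤ _ := by nlinarith [mul_nonneg hC hR]

theorem exists_abs_sub_inner_le {E : Type*} [NormedAddCommGroup E] [InnerProductSpace ℝ E]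
    {ι : Type*} [Fintype ι] (b : OrthonormalBasis ι ℝ E) {C : ℝ} {f : E → ℝ}
    (hf : IsZygmundWith C f) (hC : 0 ≤ C) (hfc : Continuous f) (x₀ : E) {r : ℝ} (hr : 0 < r) :
    ∃ a : E, ∀ x ∈ closedBall x₀ r,
      |f x - (inner ℝ a (x - x₀) + f x₀)| ≤ C * r * (Fintype.card ι * (Fintype.card ι + 5)) / 2 := by
  set slope : ι → ℝ := fun i => (f (x₀ + r • b i) - f (x₀ - r • b i)) / 2
  refine ⟨∑ i, (slope i / r) • b i, fun x hx => ?_⟩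
  have hcoord : ∀ i, inner ℝ (b i) (x - x₀) / r ∈ Icc (-1) 1 := fun i => by
    rw [mem_Icc, ← abs_le, abs_div, abs_of_pos hr, div_le_one hr]
    calc _ ≤ ‖b i‖ * ‖x - x₀‖ := abs_real_inner_le_norm _ _
      _ ≤ r := by rw [b.norm_eq_one, one_mul, ← dist_eq_norm]; exact hx
  have hx : x = x₀ + ∑ i, (inner ℝ (b i) (x - x₀) / r) • (r • b i) := by
    simp only [smul_smul, div_mul_cancel₀ _ hr.ne', b.sum_repr', add_sub_cancel]
  have hinner : inner ℝ (∑ i, (slope i / r) • b i) (x - x₀)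
      = ∑ i, inner ℝ (b i) (x - x₀) / r * slope i := by
    simp only [sum_inner, real_inner_smul_left]
    exact Finset.sum_congr rfl fun i _ => by ring
  have := hf.abs_sub_sum_le hC hfc Finset.univ x₀ (fun i => r • b i) _
    (fun i _ => by rw [norm_smul, b.norm_eq_one, mul_one, Real.norm_eq_abs, abs_of_pos hr])
    (fun i _ => hcoord i)
  rw [← hx, Finset.card_univ] at this
  rwa [hinner, add_comm, ← sub_sub]

end IsZygmundWith

theorem zygmund_affine_approximation_general
    (d : ℕ)
    (f : EuclideanSpace ℝ (Fin d) → ℝ)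
    (hf_cont : Continuous f)
    (hf_zyg : ∃ C : ℝ, ∀ x h : EuclideanSpace ℝ (Fin d), h ≠ 0 →
      |f (x + h) + f (x - h) - 2 * f x| ≤ C * ‖h‖) :
    ∃ M : ℝ, 0 < M ∧ ∀ (x₀ : EuclideanSpace ℝ (Fin d)) (r : ℝ), 0 < r →
      ∃ (a : EuclideanSpace ℝ (Fin d)) (b : ℝ),
        ∀ x ∈ ball x₀ r, |f x - ((inner ℝ a x : ℝ) + b)| ≤ M * r := by
  obtain ⟨C, hC⟩ := hf_zyg
  set C' := max C 0
  have hf : IsZygmundWith C' f := (IsZygmundWith.of_forall_ne_zero hC).mono (le_max_left _ _)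
  refine ⟨C' * (d * (d + 5)) / 2 + 1, by positivity, fun x₀ r hr => ?_⟩
  obtain ⟨a, ha⟩ := hf.exists_abs_sub_inner_le (EuclideanSpace.basisFun (Fin d) ℝ)
    (le_max_right _ _) hf_cont x₀ hr
  refine ⟨a, f x₀ - inner ℝ a x₀, fun x hx => ?_⟩
  have := ha x (ball_subset_closedBall hx)
  rw [inner_sub_right, Fintype.card_fin] at this
  calc _ = |f x - (inner ℝ a x - inner ℝ a x₀ + f x₀)| := by congr 1; ring
    _ ≤ C' * r * (d * (d + 5)) / 2 := this
    _ ≤ _ := by nlinarith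

/-- A Zygmund function `f : ℝ^d → ℝ` admits uniform affine approximations: there
is `M > 0` such that for every ball `B(x₀, r)` some affine function
`P(x) = ⟨a, x⟩ + b` satisfies `|f x - P x| ≤ M·r` on `B(x₀, r)`. -/
theorem zygmund_affine_approximation
    (d : ℕ) (hd : 1 ≤ d)
    (f : EuclideanSpace ℝ (Fin d) → ℝ)
    (hf_bdd : ∃ B : ℝ, ∀ x, |f x| ≤ B)
    (hf_cont : Continuous f)
    (hf_zyg : ∃ C : ℝ, ∀ x h : EuclideanSpace ℝ (Fin d), h ≠ 0 →
      |f (x + h) + f (x - h) - 2 * f x| ≤ C * ‖h‖) :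
    ∃ M : ℝ, 0 < M ∧ ∀ (x₀ : EuclideanSpace ℝ (Fin d)) (r : ℝ), 0 < r →
      ∃ (a : EuclideanSpace ℝ (Fin d)) (b : ℝ),
        ∀ x ∈ ball x₀ r, |f x - ((inner ℝ a x : ℝ) + b)| ≤ M * r :=
  zygmund_affine_approximation_general d f hf_cont hf_zyg
end

section
/- Let n ≥ 1, let E ⊆ ℝ^n be a bounded set, and suppose there exists a constant K ≥ 1 with the following property: for every δ > 0 and every z ∈ E there exist r ∈ (0, δ) and a point w ∈ ℝ^n with |z − w| ≤ K·r such that the open ball B(w, r) is contained in the open δ-neighborhood E_δ of E and is disjoint from E. Then μ(E) = 0 for every doubling Borel measure μ on ℝ^n. -/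
open MeasureTheory Metric

private lemma doub_iter {X : Type*} [PseudoMetricSpace X] [MeasurableSpace X]
    (μ : Measure X) (C : ℝ)
    (hC : ∀ (z : X) (r : ℝ), μ (closedBall z r) ≤ ENNReal.ofReal C * μ (closedBall z (r / 2)))
    (m : ℕ) (w : X) (s : ℝ) :
    μ (closedBall w (2 ^ m * s)) ≤ (ENNReal.ofReal C) ^ m * μ (closedBall w s) := by
  induction m with
  | zero => simp
  | succ m ih =>
    have h1 : (2 : ℝ) ^ (m + 1) * s / 2 = 2 ^ m * s := by ring
    calc μ (closedBall w (2 ^ (m + 1) * s))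
        ≤ ENNReal.ofReal C * μ (closedBall w (2 ^ (m + 1) * s / 2)) := hC _ _
      _ = ENNReal.ofReal C * μ (closedBall w (2 ^ m * s)) := by rw [h1]
      _ ≤ ENNReal.ofReal C * ((ENNReal.ofReal C) ^ m * μ (closedBall w s)) :=
          mul_le_mul_right ih _
      _ = (ENNReal.ofReal C) ^ (m + 1) * μ (closedBall w s) := by ring

/-- A bounded set `E ⊆ ℝ^n` which, at every point and at arbitrarily small
scales, has a nearby ball (at bounded relative distance `K·r`) contained in the
open `δ`-neighborhood of `E` and disjoint from `E`, is null for every doubling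
Borel measure on `ℝ^n`. -/
theorem nearby_offset_balls_implies_thin
    (n : ℕ) (hn : 1 ≤ n)
    (E : Set (EuclideanSpace ℝ (Fin n)))
    (hE_bdd : Bornology.IsBounded E)
    (K : ℝ) (hK : 1 ≤ K)
    (hOffset : ∀ δ : ℝ, 0 < δ → ∀ z ∈ E,
      ∃ (r : ℝ) (w : EuclideanSpace ℝ (Fin n)),
        0 < r ∧ r < δ ∧ dist z w ≤ K * r ∧
        ball w r ⊆ thickening δ E ∧ ball w r ∩ E = ∅)
    (μ : Measure (EuclideanSpace ℝ (Fin n)))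
    (hμ_pos : ∀ (z : EuclideanSpace ℝ (Fin n)) (r : ℝ), 0 < r →
      0 < μ (closedBall z r))
    (hμ_fin : ∀ (z : EuclideanSpace ℝ (Fin n)) (r : ℝ), μ (closedBall z r) < ⊤)
    (hμ_doub : ∃ C : ℝ, 0 < C ∧ ∀ (z : EuclideanSpace ℝ (Fin n)) (r : ℝ),
      μ (closedBall z r) ≤ ENNReal.ofReal C * μ (closedBall z (r / 2))) :
    μ E = 0 := by
  haveI : IsLocallyFiniteMeasure μ :=
    ⟨fun x => ⟨closedBall x 1, closedBall_mem_nhds x one_pos, hμ_fin x 1⟩⟩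
  obtain ⟨C, hC0, hC⟩ := hμ_doub
  have hCne0 : ENNReal.ofReal C ≠ 0 := by
    simpa [ENNReal.ofReal_eq_zero, not_le] using hC0
  have hCnetop : ENNReal.ofReal C ≠ ⊤ := ENNReal.ofReal_ne_top
  obtain ⟨m, hm⟩ : ∃ m : ℕ, 4 * K + 2 < 2 ^ m := pow_unbounded_of_one_lt _ one_lt_two
  set c : ENNReal := ((ENNReal.ofReal C)⁻¹) ^ m with hc_def
  have hc0 : c ≠ 0 := by
    simp [hc_def, pow_ne_zero, ENNReal.inv_ne_zero, hCnetop]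
  have hcC : c * (ENNReal.ofReal C) ^ m = 1 := by
    rw [hc_def, ← mul_pow, ENNReal.inv_mul_cancel hCne0 hCnetop, one_pow]
  have h1c : (1 : ENNReal) - c < 1 :=
    ENNReal.sub_lt_self ENNReal.one_ne_top one_ne_zero hc0
  -- at every point of E, the density ratio does not tend to 1
  have key : ∀ z ∈ E, ¬ Filter.Tendsto
      (fun R => μ (E ∩ closedBall z R) / μ (closedBall z R)) (nhdsWithin 0 (Set.Ioi 0))
      (nhds 1) := by
    intro z hz hT
    have hev : (fun R => μ (E ∩ closedBall z R) / μ (closedBall z R)) ⁻¹' Set.Ioi (1 - c)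
        ∈ nhdsWithin (0 : ℝ) (Set.Ioi 0) := hT (Ioi_mem_nhds h1c)
    rw [mem_nhdsGT_iff_exists_Ioo_subset] at hev
    obtain ⟨δ', hδ', hsubδ⟩ := hev
    have hδ'0 : (0 : ℝ) < δ' := hδ'
    have hK1 : (0 : ℝ) < K + 1 := by linarith
    obtain ⟨r, w, hr0, hrδ, hzw, -, hdisj⟩ :=
      hOffset (δ' / (K + 1)) (by positivity) z hz
    set R : ℝ := (K + 1) * r with hR_def
    have hR0 : 0 < R := by positivity
    have hRδ : R < δ' := by
      have := (lt_div_iff₀ hK1).mp hrδ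
      calc R = (K + 1) * r := rfl
        _ = r * (K + 1) := by ring
        _ < δ' := this
    -- the hole ball is inside the density ball
    have hsub1 : ball w r ⊆ closedBall z R := by
      intro x hx
      have hx' : dist x w < r := mem_ball.mp hx
      have : dist x z ≤ dist x w + dist w z := dist_triangle x w z
      have hwz : dist w z ≤ K * r := by rw [dist_comm]; exact hzw
      simp only [mem_closedBall]
      nlinarith
    -- the density ball is inside a controlled dilation of the hole ball
    have hsub2 : closedBall z R ⊆ closedBall w (2 ^ m * (r / 2)) := by
      intro x hx
      have hx' : dist x z ≤ R := mem_closedBall.mp hx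
      have : dist x w ≤ dist x z + dist z w := dist_triangle x z w
      simp only [mem_closedBall]
      nlinarith
    have hBR_fin : μ (closedBall z R) ≠ ⊤ := (hμ_fin z R).ne
    have hBR_pos : μ (closedBall z R) ≠ 0 := (hμ_pos z R hR0).ne'
    -- doubling estimate: c * μ(closedBall z R) ≤ μ(ball w r)
    have hdoub : c * μ (closedBall z R) ≤ μ (ball w r) := by
      have h1 : μ (closedBall z R) ≤ (ENNReal.ofReal C) ^ m * μ (closedBall w (r / 2)) :=
        le_trans (measure_mono hsub2) (doub_iter μ C hC m w (r / 2))
      have h2 : closedBall w (r / 2) ⊆ ball w r :=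
        closedBall_subset_ball (by linarith)
      calc c * μ (closedBall z R)
          ≤ c * ((ENNReal.ofReal C) ^ m * μ (closedBall w (r / 2))) :=
            mul_le_mul_right h1 _
        _ = (c * (ENNReal.ofReal C) ^ m) * μ (closedBall w (r / 2)) := by ring
        _ = μ (closedBall w (r / 2)) := by rw [hcC, one_mul]
        _ ≤ μ (ball w r) := measure_mono h2
    -- E misses the hole ball
    have hEsub : E ∩ closedBall z R ⊆ closedBall z R \ ball w r := by
      intro x hx
      refine ⟨hx.2, fun hxb => ?_⟩
      have : x ∈ ball w r ∩ E := ⟨hxb, hx.1⟩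
      simp [hdisj] at this
    have hball_fin : μ (ball w r) ≠ ⊤ :=
      ((measure_mono hsub1).trans_lt (hμ_fin z R)).ne
    have hdiff : μ (closedBall z R \ ball w r) = μ (closedBall z R) - μ (ball w r) :=
      measure_diff hsub1 measurableSet_ball.nullMeasurableSet hball_fin
    have hle : μ (E ∩ closedBall z R) ≤ (1 - c) * μ (closedBall z R) := by
      calc μ (E ∩ closedBall z R) ≤ μ (closedBall z R \ ball w r) := measure_mono hEsub
        _ = μ (closedBall z R) - μ (ball w r) := hdiff
        _ ≤ μ (closedBall z R) - c * μ (closedBall z R) := tsub_le_tsub_left hdoub _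
        _ = (1 - c) * μ (closedBall z R) := by
            rw [ENNReal.sub_mul (fun _ _ => hBR_fin), one_mul]
    have hdivle : μ (E ∩ closedBall z R) / μ (closedBall z R) ≤ 1 - c :=
      ENNReal.div_le_of_le_mul hle
    have hRin : R ∈ Set.Ioo (0 : ℝ) δ' := ⟨hR0, hRδ⟩
    have := hsubδ hRin
    exact absurd hdivle (not_le.mpr this)
  -- conclude via the Besicovitch density theorem
  have hae := Besicovitch.ae_tendsto_measure_inter_div μ E
  rw [Filter.Eventually, mem_ae_iff] at hae
  have hEsub : E ⊆ {x | Filter.Tendsto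
      (fun R => μ (E ∩ closedBall x R) / μ (closedBall x R)) (nhdsWithin 0 (Set.Ioi 0))
      (nhds 1)}ᶜ := fun x hx => key x hx
  have : μ.restrict E E = 0 := measure_mono_null hEsub hae
  rwa [Measure.restrict_apply_self] at this
end
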